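/- Let Q be a d×d Markov generator. Then the following are equivalent: (1) exp(t·Q) is a monotone Markov matrix for every t ≥ 0; (2) Q is a monotone generator, i.e. all off-diagonal entries of T⁻¹·Q·T are nonnegative, where T is the lower-triangular d×d matrix with T_{ij} = 1 for j ≤ i and T_{ij} = 0 otherwise. -/

import Mathlib

/-! Row `i` of `M * T` lists the tail sums of row `i` of `M`, while `T * P` lists the partial
column sums of `P`. Hence a nonnegative matrix `M` is monotone iff `T⁻¹ M T` is entrywise
nonnegative, and since `T⁻¹ exp(tQ) T = exp(t T⁻¹ Q T)`, the theorem reduces to the classical fact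
that `exp(tA) ≥ 0` for all `t ≥ 0` iff the off-diagonal entries of `A` are nonnegative:
necessity by differentiating at `t = 0`, sufficiency by writing `A = (A + c) - c` with `A + c ≥ 0`.
The semigroup of a generator is Markov because the exponential series fixes the all-ones vector. -/

open Matrix

/-- A Markov matrix: nonnegative entries, each row sums to 1. -/
def IsMarkov {d : ℕ} (M : Matrix (Fin d) (Fin d) ℝ) : Prop :=
  (∀ i j, 0 ≤ M i j) ∧ ∀ i, ∑ j, M i j = 1

/-- A (row-)monotone matrix: the tail sums of the rows increase with the
row index. -/
def IsMonotone {d : ℕ} (M : Matrix (Fin d) (Fin d) ℝ) : Prop :=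
  ∀ i j : Fin d, i ≤ j → ∀ m : Fin d,
    ∑ k ∈ Finset.Ici m, M i k ≤ ∑ k ∈ Finset.Ici m, M j k

/-- A Markov generator: nonnegative off-diagonal entries, zero row sums. -/
def IsGenerator {d : ℕ} (Q : Matrix (Fin d) (Fin d) ℝ) : Prop :=
  (∀ i j, i ≠ j → 0 ≤ Q i j) ∧ ∀ i, ∑ j, Q i j = 0

/-- The lower-triangular all-ones matrix `T`. -/
def Tmat (d : ℕ) : Matrix (Fin d) (Fin d) ℝ :=
  Matrix.of fun i j => if j ≤ i then 1 else 0

open NormedSpace Finset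

theorem HasDerivAt.nonneg_of_isMinOn_Ici {f : ℝ → ℝ} {f' a : ℝ} (hf : HasDerivAt f f' a)
    (hmin : IsMinOn f (Set.Ici a) a) : 0 ≤ f' := by
  have h1 : (1 : ℝ) ∈ posTangentConeAt (Set.Ici a) a :=
    mem_posTangentConeAt_of_segment_subset (by simp [segment_eq_Icc, Set.Icc_subset_Ici_self])
  simpa using hmin.localize.hasFDerivWithinAt_nonneg hf.hasFDerivAt.hasFDerivWithinAt h1

namespace Matrix

variable {ι : Type*} [Fintype ι] [DecidableEq ι]

theorem hasSum_exp_real (A : Matrix ι ι ℝ) :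
    HasSum (fun n : ℕ => (n.factorial⁻¹ : ℝ) • A ^ n) (exp A) :=
  open scoped Norms.Operator in exp_series_hasSum_exp' A

theorem hasDerivAt_exp_smul_apply_zero (A : Matrix ι ι ℝ) (i j : ι) :
    HasDerivAt (fun t : ℝ => exp (t • A) i j) (A i j) 0 := by
  open scoped Norms.Operator in
  have h := hasDerivAt_exp_smul_const (𝕂 := ℝ) A 0
  rw [zero_smul, exp_zero, one_mul] at h
  exact (LinearMap.toContinuousLinearMap (entryLinearMap ℝ ℝ i j)).hasFDerivAt.comp_hasDerivAt
    0 h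

theorem exp_apply_nonneg_of_nonneg {A : Matrix ι ι ℝ} (hA : ∀ i j, 0 ≤ A i j) (i j : ι) :
    0 ≤ exp A i j := by
  have hpow : ∀ n : ℕ, ∀ i j, 0 ≤ (A ^ n) i j := by
    intro n
    induction n with
    | zero => intro i j; rw [pow_zero, one_apply]; split_ifs <;> norm_num
    | succ n ih =>
      intro i j
      rw [pow_succ, mul_apply]
      exact sum_nonneg fun k _ => mul_nonneg (ih i k) (hA k j)
  have hsum : HasSum (fun n : ℕ => (n.factorial⁻¹ : ℝ) * (A ^ n) i j) (exp A i j) :=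
    Pi.hasSum.mp (Pi.hasSum.mp (hasSum_exp_real A) i) j
  exact hsum.nonneg fun n => mul_nonneg (by positivity) (hpow n i j)

theorem exp_apply_nonneg_of_offDiag_nonneg {A : Matrix ι ι ℝ}
    (hA : ∀ i j, i ≠ j → 0 ≤ A i j) (i j : ι) : 0 ≤ exp A i j := by
  obtain ⟨c, hc⟩ : ∃ c : ℝ, ∀ k, -A k k ≤ c :=
    ⟨∑ k, |A k k|, fun k => (neg_le_abs _).trans
      (single_le_sum (f := fun k => |A k k|) (fun k _ => abs_nonneg _) (mem_univ k))⟩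
  have hshift : ∀ i j, 0 ≤ (A + c • 1) i j := by
    intro i j
    rcases eq_or_ne i j with rfl | hij
    · simp only [add_apply, smul_apply, one_apply_eq, smul_eq_mul, mul_one]
      linarith [hc i]
    · simpa [one_apply_ne hij] using hA i j hij
  have hsplit : exp A = Real.exp (-c) • exp (A + c • 1) := by
    have hcomm : Commute (A + c • 1) (algebraMap ℝ _ (-c)) :=
      Algebra.commute_algebraMap_right _ _
    calc exp A = exp ((A + c • 1) + algebraMap ℝ _ (-c)) := by
          simp [Algebra.algebraMap_eq_smul_one]
      _ = exp (A + c • 1) * algebraMap ℝ _ (Real.exp (-c)) := by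
          rw [Matrix.exp_add_of_commute _ _ hcomm, algebraMap_eq_diagonal, exp_diagonal,
            algebraMap_eq_diagonal]
          congr 2
          ext k
          simp [Real.exp_eq_exp_ℝ]
      _ = Real.exp (-c) • exp (A + c • 1) := by
          rw [← Algebra.commutes, ← Algebra.smul_def]
  rw [hsplit, smul_apply, smul_eq_mul]
  exact mul_nonneg (Real.exp_pos _).le (exp_apply_nonneg_of_nonneg hshift i j)

theorem exp_mulVec_eq_self {A : Matrix ι ι ℝ} {v : ι → ℝ} (hA : A *ᵥ v = 0) :
    exp A *ᵥ v = v := by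
  have hpow : ∀ n : ℕ, ((n.factorial⁻¹ : ℝ) • A ^ n) *ᵥ v = if n = 0 then v else 0 := by
    rintro (_ | n)
    · simp
    · rw [smul_mulVec, pow_succ, ← mulVec_mulVec, hA, mulVec_zero, smul_zero]; simp
  have hsum : HasSum (fun n : ℕ => ((n.factorial⁻¹ : ℝ) • A ^ n) *ᵥ v) (exp A *ᵥ v) :=
    (hasSum_exp_real A).map (mulVec.addMonoidHomLeft v)
      (continuous_id.matrix_mulVec continuous_const)
  simp only [hpow] at hsum
  exact hsum.unique (hasSum_ite_eq 0 v)

theorem offDiag_nonneg_of_exp_smul_nonneg {A : Matrix ι ι ℝ}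
    (hA : ∀ t : ℝ, 0 ≤ t → ∀ i j, 0 ≤ exp (t • A) i j) (i j : ι) (hij : i ≠ j) :
    0 ≤ A i j := by
  refine (hasDerivAt_exp_smul_apply_zero A i j).nonneg_of_isMinOn_Ici fun t ht => ?_
  simpa [one_apply_ne hij] using hA t ht i j

theorem exp_smul_nonneg_iff {A : Matrix ι ι ℝ} :
    (∀ t : ℝ, 0 ≤ t → ∀ i j, 0 ≤ exp (t • A) i j) ↔ ∀ i j, i ≠ j → 0 ≤ A i j :=
  ⟨offDiag_nonneg_of_exp_smul_nonneg, fun hA _ ht =>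
    exp_apply_nonneg_of_offDiag_nonneg fun i j hij => mul_nonneg ht (hA i j hij)⟩

end Matrix

theorem isLowerTriangular_Tmat (d : ℕ) : (Tmat d).IsLowerTriangular := fun i j hij => by
  simp [Tmat, not_le.mpr (show i < j from hij)]

theorem det_Tmat (d : ℕ) : (Tmat d).det = 1 := by
  rw [det_of_isLowerTriangular _ (isLowerTriangular_Tmat d)]
  simp [Tmat]

theorem isUnit_Tmat (d : ℕ) : IsUnit (Tmat d) :=
  (isUnit_iff_isUnit_det _).mpr (by simp [det_Tmat])

theorem mul_Tmat_apply {d : ℕ} (M : Matrix (Fin d) (Fin d) ℝ) (i j : Fin d) :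
    (M * Tmat d) i j = ∑ k ∈ Ici j, M i k := by
  simp [mul_apply, Tmat, ← sum_filter, filter_le_eq_Ici]

theorem Tmat_mul_apply {d : ℕ} (M : Matrix (Fin d) (Fin d) ℝ) (i j : Fin d) :
    (Tmat d * M) i j = ∑ k ∈ Iic i, M k j := by
  simp [mul_apply, Tmat, ← sum_filter, filter_ge_eq_Iic]

theorem nonneg_of_monotone_sum_Iic {α : Type*} [LinearOrder α] [LocallyFiniteOrderBot α]
    {f : α → ℝ} (h_nonneg : ∀ i, 0 ≤ ∑ k ∈ Iic i, f k)
    (h_mono : Monotone fun i => ∑ k ∈ Iic i, f k) (i : α) : 0 ≤ f i := by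
  have hsplit : ∑ k ∈ Iic i, f k = f i + ∑ k ∈ Iio i, f k := by
    rw [Iic_eq_cons_Iio, sum_cons]
  rcases (Iio i).eq_empty_or_nonempty with hempty | hne
  · simpa [hempty, hsplit] using h_nonneg i
  · set p := (Iio i).max' hne
    have hp : p < i := mem_Iio.mp ((Iio i).max'_mem hne)
    have hIio : Iio i = Iic p := by
      ext k
      simp only [mem_Iio, mem_Iic]
      exact ⟨fun hk => (Iio i).le_max' k (mem_Iio.mpr hk), fun hk => hk.trans_lt hp⟩
    have hle := h_mono hp.le
    simp only [hsplit, hIio] at hle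
    linarith

theorem sum_Ici_eq_sum_Iic_conj {d : ℕ} (M : Matrix (Fin d) (Fin d) ℝ) (i m : Fin d) :
    ∑ k ∈ Ici m, M i k = ∑ k ∈ Iic i, ((Tmat d)⁻¹ * M * Tmat d) k m := by
  have hconj : Tmat d * ((Tmat d)⁻¹ * M * Tmat d) = M * Tmat d := by
    rw [← Matrix.mul_assoc, ← Matrix.mul_assoc,
      mul_nonsing_inv _ ((isUnit_iff_isUnit_det _).mp (isUnit_Tmat d)), Matrix.one_mul]
  rw [← mul_Tmat_apply, ← hconj, Tmat_mul_apply]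

theorem isMonotone_iff_conj_Tmat_nonneg {d : ℕ} {M : Matrix (Fin d) (Fin d) ℝ}
    (hM : ∀ i j, 0 ≤ M i j) :
    IsMonotone M ↔ ∀ i j, 0 ≤ ((Tmat d)⁻¹ * M * Tmat d) i j := by
  simp only [IsMonotone, sum_Ici_eq_sum_Iic_conj M]
  refine ⟨fun h i m => ?_, fun h i j hij m => ?_⟩
  · refine nonneg_of_monotone_sum_Iic (fun i => ?_) (fun i j hij => h i j hij m) i
    rw [← sum_Ici_eq_sum_Iic_conj]
    exact sum_nonneg fun k _ => hM i k
  · exact sum_le_sum_of_subset_of_nonneg (Iic_subset_Iic.mpr hij) fun k _ _ => h k m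

theorem IsGenerator.smul {d : ℕ} {Q : Matrix (Fin d) (Fin d) ℝ} (hQ : IsGenerator Q) {t : ℝ}
    (ht : 0 ≤ t) : IsGenerator (t • Q) :=
  ⟨fun i j hij => mul_nonneg ht (hQ.1 i j hij), fun i => by
    simp only [Matrix.smul_apply, smul_eq_mul, ← mul_sum, hQ.2 i, mul_zero]⟩

theorem IsGenerator.isMarkov_exp {d : ℕ} {Q : Matrix (Fin d) (Fin d) ℝ} (hQ : IsGenerator Q) :
    IsMarkov (exp Q) := by
  have hrows : Q *ᵥ 1 = 0 := by
    ext i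
    simpa [mulVec, dotProduct] using hQ.2 i
  refine ⟨exp_apply_nonneg_of_offDiag_nonneg hQ.1, fun i => ?_⟩
  simpa [mulVec, dotProduct] using congrFun (exp_mulVec_eq_self hrows) i

/-- the Markov semigroup `(exp(tQ))_{t ≥ 0}` consists of
monotone Markov matrices iff the generator `Q` is monotone, i.e. all
off-diagonal entries of `T⁻¹·Q·T` are nonnegative. -/
theorem stmt_14 {d : ℕ} (Q : Matrix (Fin d) (Fin d) ℝ) (hQ : IsGenerator Q) :
    (∀ t : ℝ, 0 ≤ t →
        IsMarkov (NormedSpace.exp (t • Q)) ∧ IsMonotone (NormedSpace.exp (t • Q)))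
      ↔ (∀ i j : Fin d, i ≠ j → 0 ≤ ((Tmat d)⁻¹ * Q * Tmat d) i j) := by
  have hconj (t : ℝ) :
      exp (t • ((Tmat d)⁻¹ * Q * Tmat d)) = (Tmat d)⁻¹ * exp (t • Q) * Tmat d := by
    rw [← exp_conj' _ _ (isUnit_Tmat d), Matrix.mul_smul, Matrix.smul_mul]
  rw [← exp_smul_nonneg_iff]
  refine forall₂_congr fun t ht => ?_
  have hMarkov := (hQ.smul ht).isMarkov_exp
  rw [hconj, ← isMonotone_iff_conj_Tmat_nonneg hMarkov.1]
  exact and_iff_right hMarkov
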